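/- Let Z = {x_{A_1,i_1}, x_{A_2,i_2}, …, x_{A_n,i_n}} be a set of n generators of Q_n such that i_1, i_2, …, i_n are pairwise distinct. If the set of edges {(A_1,i_1), (A_2,i_2), …, (A_n,i_n)} in the graph Γ_n is connected, then Z is a sufficient set: its du-envelope contains a defining set of pseudo-roots of 𝒫(t). -/

import Mathlib

open Polynomial

/-- Generators of the algebra `Qₙ`: pairs `(A, i)` with `A ⊆ {1,…,n}`, `i ∉ A`. -/
def QGen (n : ℕ) : Type := {p : Finset (Fin n) × Fin n // p.2 ∉ p.1}

theorem notmem_insert {n : ℕ} {A : Finset (Fin n)} {i j : Fin n}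
    (hj : j ∉ A) (hij : j ≠ i) : j ∉ insert i A :=
  fun h => (Finset.mem_insert.mp h).elim hij hj

/-- The generator `x_{A,i}` inside the free algebra. -/
def fgen (F : Type*) [Field F] (n : ℕ) (A : Finset (Fin n)) (i : Fin n) (h : i ∉ A) :
    FreeAlgebra F (QGen n) :=
  FreeAlgebra.ι F ⟨(A, i), h⟩

/-- The defining relations of `Qₙ`:
`x_{A∪{i},j} + x_{A,i} = x_{A∪{j},i} + x_{A,j}` and
`x_{A∪{i},j} · x_{A,i} = x_{A∪{j},i} · x_{A,j}`. -/
inductive QRel (F : Type*) [Field F] (n : ℕ) :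
    FreeAlgebra F (QGen n) → FreeAlgebra F (QGen n) → Prop
  | add (A : Finset (Fin n)) (i j : Fin n) (hi : i ∉ A) (hj : j ∉ A) (hij : i ≠ j) :
      QRel F n (fgen F n (insert i A) j (notmem_insert hj (Ne.symm hij)) + fgen F n A i hi)
        (fgen F n (insert j A) i (notmem_insert hi hij) + fgen F n A j hj)
  | mul (A : Finset (Fin n)) (i j : Fin n) (hi : i ∉ A) (hj : j ∉ A) (hij : i ≠ j) :
      QRel F n (fgen F n (insert i A) j (notmem_insert hj (Ne.symm hij)) * fgen F n A i hi)
        (fgen F n (insert j A) i (notmem_insert hi hij) * fgen F n A j hj)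

/-- The universal algebra of pseudo-roots `Qₙ`. -/
def Q (F : Type*) [Field F] (n : ℕ) : Type _ := RingQuot (QRel F n)

noncomputable instance (F : Type*) [Field F] (n : ℕ) : Ring (Q F n) :=
  inferInstanceAs (Ring (RingQuot (QRel F n)))

noncomputable instance (F : Type*) [Field F] (n : ℕ) : Algebra F (Q F n) :=
  inferInstanceAs (Algebra F (RingQuot (QRel F n)))

/-- The pseudo-root `x_{A,i}` in `Qₙ`. -/
noncomputable def xgen (F : Type*) [Field F] (n : ℕ) (A : Finset (Fin n)) (i : Fin n)
    (h : i ∉ A) : Q F n :=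
  RingQuot.mkAlgHom F (QRel F n) (fgen F n A i h)

theorem sigma_notmem {n : ℕ} (σ : Equiv.Perm (Fin n)) (k : Fin n) :
    σ k ∉ (Finset.Iio k).image σ := by
  simp only [Finset.mem_image, Finset.mem_Iio, not_exists, not_and]
  intro a ha h
  exact absurd (σ.injective h) (ne_of_lt ha)

/-- The polynomial `𝒫(t) = (t − x_{Aₙ,iₙ})⋯(t − x_{A₁,i₁})` associated to the ordering
`(σ 0, σ 1, …, σ (n-1))` of `{1,…,n}`, where `A_k = {σ 0, …, σ (k-1)}`. -/
noncomputable def calPolyOrd (F : Type*) [Field F] (n : ℕ) (σ : Equiv.Perm (Fin n)) :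
    Polynomial (Q F n) :=
  ((List.finRange n).reverse.map (fun k =>
    Polynomial.X - Polynomial.C
      (xgen F n ((Finset.Iio k).image σ) (σ k) (sigma_notmem σ k)))).prod

/-- The canonical polynomial `𝒫(t) ∈ Qₙ[t]` (defined via the standard ordering). -/
noncomputable def calPoly (F : Type*) [Field F] (n : ℕ) : Polynomial (Q F n) :=
  calPolyOrd F n 1

/-- The `du`-envelope of a set `Z ⊆ Qₙ`: the smallest set containing `Z` and closed
under `d`- and `u`-operations on pairs of pseudo-roots. -/
inductive DuEnv (F : Type*) [Field F] (n : ℕ) (Z : Set (Q F n)) : Q F n → Prop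
  | base {z : Q F n} : z ∈ Z → DuEnv F n Z z
  | u {A : Finset (Fin n)} {i j : Fin n} (hi : i ∉ A) (hj : j ∉ A) (ξ : Q F n) :
      DuEnv F n Z (xgen F n A i hi) → DuEnv F n Z (xgen F n A j hj) →
      (xgen F n A i hi - xgen F n A j hj) * xgen F n A i hi =
        ξ * (xgen F n A i hi - xgen F n A j hj) →
      DuEnv F n Z ξ
  | d {A B : Finset (Fin n)} {i j : Fin n} (hi : i ∉ A) (hj : j ∉ B) (η : Q F n) :
      insert i A = insert j B →
      DuEnv F n Z (xgen F n A i hi) → DuEnv F n Z (xgen F n B j hj) →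
      (xgen F n A i hi - xgen F n B j hj) * η =
        xgen F n A i hi * (xgen F n A i hi - xgen F n B j hj) →
      DuEnv F n Z η

/-- A set `Y ⊆ Qₙ` is a defining set of pseudo-roots of `𝒫(t)` if
`𝒫(t) = (t − yₙ)(t − y_{n-1})⋯(t − y₁)` with all `y_k ∈ Y`. -/
def Defining (F : Type*) [Field F] (n : ℕ) (Y : Set (Q F n)) : Prop :=
  ∃ y : Fin n → Q F n, (∀ k, y k ∈ Y) ∧
    calPoly F n =
      ((List.finRange n).reverse.map (fun k => Polynomial.X - Polynomial.C (y k))).prod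

/-- A set `Z ⊆ Qₙ` is sufficient if its `du`-envelope contains a defining set of
pseudo-roots of `𝒫(t)`. -/
def Sufficient (F : Type*) [Field F] (n : ℕ) (Z : Set (Q F n)) : Prop :=
  ∃ Y : Set (Q F n), (∀ q ∈ Y, DuEnv F n Z q) ∧ Defining F n Y

/-- One step of a walk traversing (in either direction) an edge of the set
`{(A_k, i_k)}` in the graph `Γₙ`; the edge `(A,i)` has tail `A ∪ {i}` and head `A`. -/
def GammaStep {n : ℕ} (A : Fin n → Finset (Fin n)) (i : Fin n → Fin n)
    (v w : Finset (Fin n)) : Prop :=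
  ∃ k, (v = insert (i k) (A k) ∧ w = A k) ∨ (w = insert (i k) (A k) ∧ v = A k)

/-- The set of heads and tails of the edges `{(A_k, i_k)}` in `Γₙ`. -/
def GammaVert {n : ℕ} (A : Fin n → Finset (Fin n)) (i : Fin n → Fin n) :
    Set (Finset (Fin n)) :=
  {v | ∃ k, v = insert (i k) (A k) ∨ v = A k}

/-- The set of edges `{(A_k, i_k)}` of `Γₙ` is connected: any two of its vertices are
joined by a walk traversing edges of the set in either direction. -/
def GammaConnected {n : ℕ} (A : Fin n → Finset (Fin n)) (i : Fin n → Fin n) : Prop :=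
  ∀ v ∈ GammaVert A i, ∀ w ∈ GammaVert A i, Relation.ReflTransGen (GammaStep A i) v w

section Alg
variable {F : Type*} [Field F] {n : ℕ}

theorem xgen_proof_irrel (A : Finset (Fin n)) (i : Fin n) (h h' : i ∉ A) :
    xgen F n A i h = xgen F n A i h' := rfl

theorem xgen_congr {A B : Finset (Fin n)} {a b : Fin n} (h1 : A = B) (h2 : a = b)
    (ha : a ∉ A) (hb : b ∉ B) : xgen F n A a ha = xgen F n B b hb := by
  subst h1; subst h2; rfl

theorem xadd (A : Finset (Fin n)) (i j : Fin n) (hi : i ∉ A) (hj : j ∉ A) (hij : i ≠ j) :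
    xgen F n (insert i A) j (notmem_insert hj (Ne.symm hij)) + xgen F n A i hi =
      xgen F n (insert j A) i (notmem_insert hi hij) + xgen F n A j hj := by
  have := RingQuot.mkAlgHom_rel F (s := QRel F n) (QRel.add A i j hi hj hij)
  simp only [map_add] at this
  exact this

theorem xmul (A : Finset (Fin n)) (i j : Fin n) (hi : i ∉ A) (hj : j ∉ A) (hij : i ≠ j) :
    xgen F n (insert i A) j (notmem_insert hj (Ne.symm hij)) * xgen F n A i hi =
      xgen F n (insert j A) i (notmem_insert hi hij) * xgen F n A j hj := by
  have := RingQuot.mkAlgHom_rel F (s := QRel F n) (QRel.mul A i j hi hj hij)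
  simp only [map_mul] at this
  exact this

theorem xsub (A : Finset (Fin n)) (i j : Fin n) (hi : i ∉ A) (hj : j ∉ A) (hij : i ≠ j) :
    xgen F n (insert j A) i (notmem_insert hi hij) -
      xgen F n (insert i A) j (notmem_insert hj (Ne.symm hij)) =
    xgen F n A i hi - xgen F n A j hj := by
  have h := xadd (F := F) A i j hi hj hij
  rw [sub_eq_sub_iff_add_eq_add, ← h, add_comm]

theorem u_id (A : Finset (Fin n)) (i j : Fin n) (hi : i ∉ A) (hj : j ∉ A) (hij : i ≠ j) :
    (xgen F n A i hi - xgen F n A j hj) * xgen F n A i hi =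
      xgen F n (insert j A) i (notmem_insert hi hij) *
        (xgen F n A i hi - xgen F n A j hj) := by
  have hm := xmul (F := F) A i j hi hj hij
  have hs := xsub (F := F) A i j hi hj hij
  rw [mul_sub, ← hm, ← sub_mul, hs]

theorem d_id (C : Finset (Fin n)) (i j : Fin n) (hi : i ∉ C) (hj : j ∉ C) (hij : i ≠ j) :
    (xgen F n (insert j C) i (notmem_insert hi hij) -
        xgen F n (insert i C) j (notmem_insert hj (Ne.symm hij))) * xgen F n C i hi =
      xgen F n (insert j C) i (notmem_insert hi hij) *
        (xgen F n (insert j C) i (notmem_insert hi hij) -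
          xgen F n (insert i C) j (notmem_insert hj (Ne.symm hij))) := by
  have hm := xmul (F := F) C i j hi hj hij
  have hs := xsub (F := F) C i j hi hj hij
  rw [sub_mul, hm, ← mul_sub, ← hs]

variable (F n) in
/-- The edge `(A,j)` has its pseudo-root in the `du`-envelope of `Z`. -/
def Env (Z : Set (Q F n)) (A : Finset (Fin n)) (j : Fin n) : Prop :=
  ∃ h : j ∉ A, DuEnv F n Z (xgen F n A j h)

variable {Z : Set (Q F n)}

theorem Env.notmem {A : Finset (Fin n)} {j : Fin n} (h : Env F n Z A j) : j ∉ A := h.1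

theorem env_u {A : Finset (Fin n)} {i j : Fin n} (hij : i ≠ j)
    (h1 : Env F n Z A i) (h2 : Env F n Z A j) : Env F n Z (insert j A) i := by
  obtain ⟨hi, di⟩ := h1
  obtain ⟨hj, dj⟩ := h2
  exact ⟨notmem_insert hi hij,
    DuEnv.u hi hj _ di dj (u_id A i j hi hj hij)⟩

theorem env_d {C : Finset (Fin n)} {i j : Fin n} (hij : i ≠ j) (hi : i ∉ C) (hj : j ∉ C)
    (h1 : Env F n Z (insert j C) i) (h2 : Env F n Z (insert i C) j) : Env F n Z C i := by
  obtain ⟨hi', di⟩ := h1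
  obtain ⟨hj', dj⟩ := h2
  exact ⟨hi, DuEnv.d hi' hj' _ (Finset.insert_comm i j C) di dj (d_id C i j hi hj hij)⟩

end Alg

section Chains
variable {n : ℕ} (E : Finset (Fin n) → Fin n → Prop)

/-- A chain of edges in the envelope, starting at base `C`, with successive
directions given by the list `l`. -/
def EChain : Finset (Fin n) → List (Fin n) → Prop
  | _, [] => True
  | C, a :: l => E C a ∧ EChain (insert a C) l

variable {E}
variable (hV : ∀ {A : Finset (Fin n)} {i : Fin n}, E A i → i ∉ A)
variable (hU : ∀ {A : Finset (Fin n)} {i j : Fin n}, i ≠ j → E A i → E A j → E (insert j A) i)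
variable (hD : ∀ {C : Finset (Fin n)} {i j : Fin n}, i ≠ j → i ∉ C → j ∉ C →
    E (insert j C) i → E (insert i C) j → E C i)

theorem echain_append {l₁ l₂ : List (Fin n)} {C : Finset (Fin n)} :
    EChain E C (l₁ ++ l₂) ↔ EChain E C l₁ ∧ EChain E (C ∪ l₁.toFinset) l₂ := by
  induction l₁ generalizing C with
  | nil => simp [EChain]
  | cons a l ih =>
    simp [EChain, ih, Finset.union_insert, Finset.insert_union, and_assoc]

include hV in
theorem echain_notmem {l : List (Fin n)} {C : Finset (Fin n)} (h : EChain E C l) :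
    ∀ x ∈ l, x ∉ C := by
  induction l generalizing C with
  | nil => simp
  | cons a l ih =>
    intro x hx
    rcases List.mem_cons.mp hx with rfl | hx
    · exact hV h.1
    · exact fun hC => ih h.2 x hx (Finset.mem_insert_of_mem hC)

include hV in
theorem echain_nodup {l : List (Fin n)} {C : Finset (Fin n)} (h : EChain E C l) :
    l.Nodup := by
  induction l generalizing C with
  | nil => simp
  | cons a l ih =>
    exact List.nodup_cons.mpr
      ⟨fun ha => echain_notmem hV h.2 a ha (Finset.mem_insert_self a C), ih h.2⟩

include hU in
theorem shift_up {l : List (Fin n)} {C : Finset (Fin n)} {d : Fin n}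
    (h : EChain E C l) (hd : E C d) (hdl : d ∉ l) :
    EChain E (insert d C) l ∧ E (C ∪ l.toFinset) d := by
  induction l generalizing C with
  | nil => exact ⟨trivial, by simpa using hd⟩
  | cons a l ih =>
    have hda : d ≠ a := fun e => hdl (e ▸ List.mem_cons_self (a := a) (l := l))
    have hEad : E (insert a C) d := hU hda hd h.1
    have hEda : E (insert d C) a := hU (Ne.symm hda) h.1 hd
    obtain ⟨hch, htop⟩ := ih h.2 hEad (fun hm => hdl (List.mem_cons_of_mem a hm))
    refine ⟨⟨hEda, ?_⟩, ?_⟩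
    · rwa [Finset.insert_comm]
    · rwa [List.toFinset_cons, Finset.union_insert, ← Finset.insert_union]

include hV hD in
theorem shift_down {l : List (Fin n)} {C : Finset (Fin n)} {d : Fin n}
    (h : EChain E C l) (he : E ((C ∪ l.toFinset).erase d) d) (hd : d ∈ C) :
    EChain E (C.erase d) l ∧ E (C.erase d) d := by
  induction l generalizing C with
  | nil => exact ⟨trivial, by simpa using he⟩
  | cons a l ih =>
    have haC : a ∉ C := hV h.1
    have had : a ≠ d := fun e => haC (e ▸ hd)
    have he' : E ((insert a C ∪ l.toFinset).erase d) d := by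
      rwa [Finset.insert_union, ← Finset.union_insert, ← List.toFinset_cons]
    obtain ⟨hch, htop⟩ := ih h.2 he' (Finset.mem_insert_of_mem hd)
    rw [Finset.erase_insert_of_ne had] at hch htop
    have hins : insert d (C.erase d) = C := Finset.insert_erase hd
    have hCa : E (insert d (C.erase d)) a := by rw [hins]; exact h.1
    have hEa : E (C.erase d) a :=
      hD had (fun hm => haC (Finset.mem_of_mem_erase hm)) (Finset.notMem_erase d C) hCa htop
    have hEd : E (C.erase d) d :=
      hD (Ne.symm had) (Finset.notMem_erase d C) (fun hm => haC (Finset.mem_of_mem_erase hm))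
        htop hCa
    exact ⟨⟨hEa, hch⟩, hEd⟩

end Chains

section Invariant
variable {n : ℕ} {E : Finset (Fin n) → Fin n → Prop}
variable (E) (A : Fin n → Finset (Fin n)) (i : Fin n → Fin n)

/-- `v` is an endpoint of one of the edges `(A k, i k)`, `k ∈ s`. -/
def InVert (s : Finset (Fin n)) (v : Finset (Fin n)) : Prop :=
  ∃ k ∈ s, v = A k ∨ v = insert (i k) (A k)

/-- The invariant: there is a common base `C` such that through every vertex of the
edge set `s` there is a chain (with directions the labels of `s`) in the envelope. -/
def ChInv (s : Finset (Fin n)) : Prop :=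
  ∃ C : Finset (Fin n), ∀ v, InVert A i s v →
    ∃ l₁ l₂ : List (Fin n), EChain E C (l₁ ++ l₂) ∧
      (l₁ ++ l₂).toFinset = s.image i ∧ v = C ∪ l₁.toFinset

variable {E A i}
variable (hV : ∀ {B : Finset (Fin n)} {a : Fin n}, E B a → a ∉ B)
variable (hU : ∀ {B : Finset (Fin n)} {a b : Fin n}, a ≠ b → E B a → E B b → E (insert b B) a)
variable (hD : ∀ {B : Finset (Fin n)} {a b : Fin n}, a ≠ b → a ∉ B → b ∉ B →
    E (insert b B) a → E (insert a B) b → E B a)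
variable (hbase : ∀ k, E (A k) (i k)) (hinj : Function.Injective i)

include hV hU hD hbase hinj in
theorem inv_attach {s : Finset (Fin n)} {k : Fin n} (hk : k ∉ s)
    (hatt : InVert A i s (A k) ∨ InVert A i s (insert (i k) (A k)))
    (hInv : ChInv E A i s) : ChInv E A i (insert k s) := by
  classical
  obtain ⟨C, H⟩ := hInv
  set d := i k with hd
  have hdS : d ∉ s.image i := by
    simp only [Finset.mem_image, not_exists, not_and]
    intro k' hk' he
    exact hk (hinj he ▸ hk')
  have hdA : d ∉ A k := hV (hbase k)
  have himg : (insert k s).image i = insert d (s.image i) := Finset.image_insert i k s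
  rcases hatt with hatt | hatt
  · -- head case : `A k` is a vertex of `s`
    obtain ⟨l₁, l₂, hch, hto, hv⟩ := H _ hatt
    have hsplit := (echain_append (E := E)).mp hch
    have hch2 : EChain E (A k) l₂ := by rw [hv]; exact hsplit.2
    have hdl : d ∉ l₁ ++ l₂ := fun hm => hdS (hto ▸ List.mem_toFinset.mpr hm)
    obtain ⟨chU, topU⟩ := shift_up hU hch2 (hbase k)
      (fun hm => hdl (List.mem_append_right l₁ hm))
    have htopset : A k ∪ l₂.toFinset = C ∪ s.image i := by
      rw [hv, ← hto, List.toFinset_append, Finset.union_assoc]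
    rw [htopset] at topU
    -- helper : append `d` on top of any chain with direction set `s.image i`
    have Happ : ∀ m₁ m₂ : List (Fin n), EChain E C (m₁ ++ m₂) →
        (m₁ ++ m₂).toFinset = s.image i →
        EChain E C (m₁ ++ (m₂ ++ [d])) ∧
          (m₁ ++ (m₂ ++ [d])).toFinset = (insert k s).image i := by
      intro m₁ m₂ hchm htom
      constructor
      · rw [← List.append_assoc]
        refine (echain_append (E := E)).mpr ⟨hchm, ?_⟩
        rw [htom]
        exact ⟨topU, trivial⟩
      · rw [himg, ← htom]
        ext x
        simp only [List.mem_toFinset, List.mem_append, List.mem_cons, List.not_mem_nil,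
          or_false, Finset.mem_insert]
        tauto
    refine ⟨C, ?_⟩
    rintro v ⟨k', hk', hv'⟩
    rcases Finset.mem_insert.mp hk' with hkk | hk's
    · -- the new edge
      rw [hkk] at hv'
      have hset : C ∪ (l₁ ++ [d]).toFinset = insert d (A k) := by
        rw [hv]
        ext x
        simp only [Finset.mem_union, List.mem_toFinset, List.mem_append, List.mem_cons,
          List.not_mem_nil, or_false, Finset.mem_insert]
        tauto
      rcases hv' with rfl | rfl
      · obtain ⟨hc, ht⟩ := Happ l₁ l₂ hch hto
        exact ⟨l₁, l₂ ++ [d], hc, ht, hv⟩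
      · -- v = insert d (A k)
        refine ⟨l₁ ++ [d], l₂, ?_, ?_, hset.symm⟩
        · refine (echain_append (E := E)).mpr ⟨(echain_append (E := E)).mpr
            ⟨hsplit.1, ?_⟩, ?_⟩
          · rw [← hv]; exact ⟨hbase k, trivial⟩
          · rw [hset]; exact chU
        · rw [himg, ← hto]
          ext x
          simp only [List.mem_toFinset, List.mem_append, List.mem_cons, List.not_mem_nil,
            or_false, Finset.mem_insert]
          tauto
    · obtain ⟨m₁, m₂, hchm, htom, hvm⟩ := H v ⟨k', hk's, hv'⟩
      obtain ⟨hc, ht⟩ := Happ m₁ m₂ hchm htom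
      exact ⟨m₁, m₂ ++ [d], hc, ht, hvm⟩
  · -- tail case : `insert d (A k)` is a vertex of `s`
    obtain ⟨l₁, l₂, hch, hto, hv⟩ := H _ hatt
    have hsplit := (echain_append (E := E)).mp hch
    have hdl : d ∉ l₁ ++ l₂ := fun hm => hdS (hto ▸ List.mem_toFinset.mpr hm)
    have hdl₁ : d ∉ l₁.toFinset := fun hm =>
      hdl (List.mem_append_left l₂ (List.mem_toFinset.mp hm))
    have hdC : d ∈ C := by
      have : d ∈ C ∪ l₁.toFinset := by
        rw [← hv]; exact Finset.mem_insert_self d (A k)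
      rcases Finset.mem_union.mp this with h' | h'
      · exact h'
      · exact absurd h' hdl₁
    have hAk : (C ∪ l₁.toFinset).erase d = A k := by
      rw [← hv, Finset.erase_insert hdA]
    obtain ⟨chD, hEd⟩ := shift_down hV hD hsplit.1 (by rw [hAk]; exact hbase k) hdC
    have hCd : insert d (C.erase d) = C := Finset.insert_erase hdC
    have hbase' : C.erase d ∪ l₁.toFinset = A k := by
      rw [← hAk, Finset.erase_union_distrib, Finset.erase_eq_of_notMem hdl₁]
    refine ⟨C.erase d, ?_⟩
    rintro v ⟨k', hk', hv'⟩
    have Hold : ∀ v', InVert A i s v' →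
        ∃ l₁' l₂' : List (Fin n), EChain E (C.erase d) (l₁' ++ l₂') ∧
          (l₁' ++ l₂').toFinset = (insert k s).image i ∧ v' = C.erase d ∪ l₁'.toFinset := by
      intro v' hv''
      obtain ⟨m₁, m₂, hchm, htom, hvm⟩ := H v' hv''
      refine ⟨d :: m₁, m₂, ⟨hEd, by rw [hCd]; exact hchm⟩, ?_, ?_⟩
      · rw [himg, ← htom]
        simp
      · rw [hvm, List.toFinset_cons, Finset.union_insert, ← Finset.insert_union, hCd]
    rcases Finset.mem_insert.mp hk' with hkk | hk's
    · rw [hkk] at hv'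
      rcases hv' with rfl | rfl
      · -- v = A k
        refine ⟨l₁, d :: l₂, ?_, ?_, hbase'.symm⟩
        · refine (echain_append (E := E)).mpr ⟨chD, ?_⟩
          rw [hbase']
          refine ⟨hbase k, ?_⟩
          show EChain E (insert d (A k)) l₂
          rw [hv]; exact hsplit.2
        · rw [himg, ← hto]
          ext x
          simp only [List.mem_toFinset, List.mem_append, List.mem_cons, Finset.mem_insert]
          tauto
      · exact Hold _ hatt
    · exact Hold v ⟨k', hk's, hv'⟩

end Invariant

section Walk
variable {n : ℕ} {E : Finset (Fin n) → Fin n → Prop}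
variable {A : Fin n → Finset (Fin n)} {i : Fin n → Fin n}

theorem exists_attach (hconn : GammaConnected A i) {s : Finset (Fin n)}
    (hne : s.Nonempty) (hproper : s ≠ Finset.univ) :
    ∃ k ∉ s, InVert A i s (A k) ∨ InVert A i s (insert (i k) (A k)) := by
  classical
  obtain ⟨j₀, hj₀⟩ := hne
  obtain ⟨g, hg⟩ : ∃ g, g ∉ s := by
    by_contra hc
    push_neg at hc
    exact hproper (Finset.eq_univ_iff_forall.mpr hc)
  have key : ∀ {x y : Finset (Fin n)}, Relation.ReflTransGen (GammaStep A i) x y →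
      InVert A i s x →
      InVert A i s y ∨ ∃ k ∉ s, InVert A i s (A k) ∨ InVert A i s (insert (i k) (A k)) := by
    intro x y hxy hx
    induction hxy with
    | refl => exact Or.inl hx
    | tail _ hstep ih =>
      rcases ih with hp | hex
      · obtain ⟨k, hk⟩ := hstep
        by_cases hks : k ∈ s
        · rcases hk with ⟨_, hw⟩ | ⟨hw, _⟩
          · exact Or.inl ⟨k, hks, Or.inl hw⟩
          · exact Or.inl ⟨k, hks, Or.inr hw⟩
        · rcases hk with ⟨hp', _⟩ | ⟨_, hp'⟩
          · exact Or.inr ⟨k, hks, Or.inr (hp' ▸ hp)⟩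
          · exact Or.inr ⟨k, hks, Or.inl (hp' ▸ hp)⟩
      · exact Or.inr hex
  have hwalk : Relation.ReflTransGen (GammaStep A i) (A j₀) (A g) :=
    hconn _ ⟨j₀, Or.inr rfl⟩ _ ⟨g, Or.inr rfl⟩
  rcases key hwalk ⟨j₀, hj₀, Or.inl rfl⟩ with hend | hex
  · exact ⟨g, hg, Or.inl hend⟩
  · exact hex

variable (hV : ∀ {B : Finset (Fin n)} {a : Fin n}, E B a → a ∉ B)
variable (hU : ∀ {B : Finset (Fin n)} {a b : Fin n}, a ≠ b → E B a → E B b → E (insert b B) a)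
variable (hD : ∀ {B : Finset (Fin n)} {a b : Fin n}, a ≠ b → a ∉ B → b ∉ B →
    E (insert b B) a → E (insert a B) b → E B a)
variable (hbase : ∀ k, E (A k) (i k)) (hinj : Function.Injective i)

include hV hU hD hbase hinj in
theorem inv_univ (hconn : GammaConnected A i) (hn : 0 < n) :
    ChInv E A i Finset.univ := by
  classical
  have main : ∀ m : ℕ, 1 ≤ m → m ≤ n → ∃ s : Finset (Fin n), s.card = m ∧ ChInv E A i s := by
    intro m
    induction m with
    | zero => omega
    | succ m ih =>
      intro _ hmn
      rcases Nat.eq_zero_or_pos m with rfl | hm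
      · -- base : a single edge
        obtain ⟨k₀⟩ : Nonempty (Fin n) := ⟨⟨0, hn⟩⟩
        refine ⟨{k₀}, by simp, A k₀, ?_⟩
        rintro v ⟨k, hk, hv⟩
        rw [Finset.mem_singleton] at hk
        subst hk
        rcases hv with rfl | rfl
        · exact ⟨[], [i k], ⟨hbase k, trivial⟩, by simp, by simp⟩
        · refine ⟨[i k], [], ⟨hbase k, trivial⟩, by simp, ?_⟩
          ext x
          simp [or_comm]
      · obtain ⟨s, hcard, hinv⟩ := ih hm (le_of_lt hmn)
        have hne : s.Nonempty := Finset.card_pos.mp (hcard ▸ hm)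
        have hproper : s ≠ Finset.univ := by
          intro he
          rw [he, Finset.card_univ, Fintype.card_fin] at hcard
          omega
        obtain ⟨k, hk, hatt⟩ := exists_attach hconn hne hproper
        exact ⟨insert k s, by rw [Finset.card_insert_of_notMem hk, hcard],
          inv_attach hV hU hD hbase hinj hk hatt hinv⟩
  obtain ⟨s, hcard, hinv⟩ := main n hn le_rfl
  have : s = Finset.univ := Finset.eq_univ_of_card s (by simp [hcard])
  exact this ▸ hinv

end Walk

section Poly
variable {F : Type*} [Field F] {n : ℕ}

variable (F n) in
/-- The pseudo-root `x_{C,a}` (or `0` if the pair is invalid). -/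
noncomputable def xg (C : Finset (Fin n)) (a : Fin n) : Q F n :=
  if h : a ∉ C then xgen F n C a h else 0

variable (F n) in
/-- The product `(t - x_{·,aₘ})⋯(t - x_{C,a₁})` along the list `a₁,…,aₘ`. -/
noncomputable def gpoly : Finset (Fin n) → List (Fin n) → Polynomial (Q F n)
  | _, [] => 1
  | C, a :: l => gpoly (insert a C) l * (Polynomial.X - Polynomial.C (xg F n C a))

theorem quad_expand {R : Type*} [Ring R] (u v : R) :
    (Polynomial.X - Polynomial.C u) * (Polynomial.X - Polynomial.C v) =
      Polynomial.X * Polynomial.X - (Polynomial.C u + Polynomial.C v) * Polynomial.X +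
        Polynomial.C (u * v) := by
  rw [sub_mul, mul_sub, mul_sub, Polynomial.X_mul_C, Polynomial.C_mul, add_mul]
  abel

theorem quad_eq {R : Type*} [Ring R] {a b c d : R} (h1 : a + b = c + d)
    (h2 : a * b = c * d) :
    (Polynomial.X - Polynomial.C a) * (Polynomial.X - Polynomial.C b) =
      (Polynomial.X - Polynomial.C c) * (Polynomial.X - Polynomial.C d) := by
  rw [quad_expand, quad_expand, h2, ← Polynomial.C_add, ← Polynomial.C_add, h1]

theorem gpoly_perm {l₁ l₂ : List (Fin n)} (p : l₁.Perm l₂) :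
    ∀ C : Finset (Fin n), l₁.Nodup → (∀ x ∈ l₁, x ∉ C) →
      gpoly F n C l₁ = gpoly F n C l₂ := by
  induction p with
  | nil => intro _ _ _; rfl
  | cons a p ih =>
    intro C hnd hdisj
    show gpoly F n (insert a C) _ * _ = gpoly F n (insert a C) _ * _
    rw [ih (insert a C) (List.nodup_cons.mp hnd).2 ?_]
    intro x hx
    rcases List.nodup_cons.mp hnd with ⟨ha, _⟩
    intro hxm
    rcases Finset.mem_insert.mp hxm with rfl | hxC
    · exact ha hx
    · exact hdisj x (List.mem_cons_of_mem a hx) hxC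
  | swap x y l =>
    intro C hnd hdisj
    have hyx : y ≠ x := by
      simp only [List.nodup_cons, List.mem_cons] at hnd
      exact fun e => hnd.1 (Or.inl e)
    have hyC : y ∉ C := hdisj y (List.mem_cons_self (a := y))
    have hxC : x ∉ C := hdisj x (List.mem_cons_of_mem y (List.mem_cons_self (a := x) (l := l)))
    show gpoly F n (insert x (insert y C)) l * _ * _ =
      gpoly F n (insert y (insert x C)) l * _ * _
    rw [Finset.insert_comm, mul_assoc, mul_assoc]
    congr 1
    have e1 : xg F n (insert y C) x = xgen F n (insert y C) x (notmem_insert hxC (Ne.symm hyx)) := by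
      rw [xg, dif_pos]
    have e2 : xg F n C y = xgen F n C y hyC := by rw [xg, dif_pos]
    have e3 : xg F n (insert x C) y = xgen F n (insert x C) y (notmem_insert hyC hyx) := by
      rw [xg, dif_pos]
    have e4 : xg F n C x = xgen F n C x hxC := by rw [xg, dif_pos]
    rw [e1, e2, e3, e4]
    exact quad_eq (xadd C y x hyC hxC hyx) (xmul C y x hyC hxC hyx)
  | trans p₁ p₂ ih₁ ih₂ =>
    intro C hnd hdisj
    rw [ih₁ C hnd hdisj, ih₂ C (p₁.nodup_iff.mp hnd) (fun x hx => hdisj x (p₁.mem_iff.mpr hx))]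

theorem mem_take_finRange {m : ℕ} (hm : m ≤ n) (a : Fin n) :
    a ∈ (List.finRange n).take m ↔ (a : ℕ) < m := by
  rw [List.mem_take_iff_getElem]
  constructor
  · rintro ⟨j, hj, rfl⟩
    simp only [List.getElem_finRange]
    simp only [lt_min_iff] at hj
    exact hj.1
  · intro ha
    refine ⟨a, ?_, ?_⟩
    · simp only [lt_min_iff, List.length_finRange]
      exact ⟨ha, a.isLt⟩
    · simp [List.getElem_finRange, Fin.cast, Fin.eta]

theorem take_finRange_image (σ : Equiv.Perm (Fin n)) {m : ℕ} (hm : m < n) :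
    (((List.finRange n).take m).map σ).toFinset =
      (Finset.Iio (⟨m, hm⟩ : Fin n)).image σ := by
  ext x
  simp only [List.mem_toFinset, List.mem_map, Finset.mem_image, Finset.mem_Iio]
  constructor
  · rintro ⟨a, ha, rfl⟩
    exact ⟨a, (mem_take_finRange (le_of_lt hm) a).mp ha, rfl⟩
  · rintro ⟨a, ha, rfl⟩
    exact ⟨a, (mem_take_finRange (le_of_lt hm) a).mpr ha, rfl⟩

theorem calPolyOrd_bridge (σ : Equiv.Perm (Fin n)) :
    ∀ t m : ℕ, n - m = t →
      (((List.finRange n).drop m).reverse.map (fun k =>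
        Polynomial.X - Polynomial.C
          (xgen F n ((Finset.Iio k).image σ) (σ k) (sigma_notmem σ k)))).prod =
      gpoly F n ((((List.finRange n).take m).map σ).toFinset)
        (((List.finRange n).drop m).map σ) := by
  intro t
  induction t with
  | zero =>
    intro m hm
    have hdrop : (List.finRange n).drop m = [] := by
      apply List.drop_eq_nil_of_le
      simp only [List.length_finRange]
      omega
    rw [hdrop]
    rfl
  | succ t iht =>
    intro m hm
    have hmn : m < n := by omega
    have hlen : m < (List.finRange n).length := by simp [hmn]
    rw [List.drop_eq_getElem_cons hlen]
    have hget : (List.finRange n)[m] = (⟨m, hmn⟩ : Fin n) := by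
      simp [List.getElem_finRange, Fin.cast]
    rw [hget]
    rw [List.reverse_cons, List.map_append, List.prod_append, List.map_cons, List.map_nil,
      List.prod_cons, List.prod_nil, mul_one]
    rw [iht (m + 1) (by omega)]
    rw [List.map_cons]
    show _ = gpoly F n _ (σ ⟨m, hmn⟩ :: _)
    rw [gpoly]
    congr 1
    · congr 1
      rw [← List.take_concat_get hlen, hget]
      ext x
      simp only [List.concat_eq_append, List.map_append, List.toFinset_append,
        List.map_cons, List.map_nil, List.toFinset_cons, List.toFinset_nil,
        Finset.mem_union, Finset.mem_insert, Finset.notMem_empty, or_false]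
      tauto
    · congr 1
      rw [take_finRange_image σ hmn, xg, dif_pos (sigma_notmem σ ⟨m, hmn⟩)]

theorem calPolyOrd_eq_gpoly (σ : Equiv.Perm (Fin n)) :
    calPolyOrd F n σ = gpoly F n ∅ ((List.finRange n).map σ) := by
  have := calPolyOrd_bridge (F := F) σ (n - 0) 0 rfl
  simpa [calPolyOrd] using this

theorem calPolyOrd_eq (σ : Equiv.Perm (Fin n)) : calPolyOrd F n σ = calPoly F n := by
  rw [calPoly, calPolyOrd_eq_gpoly, calPolyOrd_eq_gpoly]
  apply gpoly_perm
  · apply List.perm_of_nodup_nodup_toFinset_eq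
    · exact (List.nodup_finRange n).map σ.injective
    · exact (List.nodup_finRange n).map (1 : Equiv.Perm (Fin n)).injective
    · ext x
      simp only [List.mem_toFinset, List.mem_map]
      constructor
      · rintro ⟨a, _, rfl⟩
        exact ⟨σ a, List.mem_finRange _, rfl⟩
      · rintro ⟨a, _, rfl⟩
        exact ⟨σ.symm a, List.mem_finRange _, by simp⟩
  · exact (List.nodup_finRange n).map σ.injective
  · simp

end Poly

section Final

theorem echain_getElem {n : ℕ} {E : Finset (Fin n) → Fin n → Prop}
    {l : List (Fin n)} {C : Finset (Fin n)} (h : EChain E C l) (m : ℕ)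
    (hm : m < l.length) : E (C ∪ (l.take m).toFinset) l[m] := by
  induction l generalizing C m with
  | nil => simp at hm
  | cons a l ih =>
    cases m with
    | zero => simpa using h.1
    | succ m =>
      have hrec := ih h.2 m (by simpa using hm)
      rw [Finset.insert_union] at hrec
      simp only [List.take_succ_cons, List.getElem_cons_succ, List.toFinset_cons,
        Finset.union_insert]
      exact hrec

variable {F : Type*} [Field F] {n : ℕ}

theorem stmt9_aux (A : Fin n → Finset (Fin n)) (i : Fin n → Fin n) (h : ∀ k, i k ∉ A k)
    (hinj : Function.Injective i) (hconn : GammaConnected A i) (hn : 0 < n)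
    (Z : Set (Q F n)) (hZ : ∀ k, Z (xgen F n (A k) (i k) (h k))) :
    ∃ l : List (Fin n), EChain (Env F n Z) ∅ l ∧ l.Nodup ∧ l.toFinset = Finset.univ := by
  classical
  have hV : ∀ {B : Finset (Fin n)} {a : Fin n}, Env F n Z B a → a ∉ B := fun he => he.notmem
  have hU : ∀ {B : Finset (Fin n)} {a b : Fin n}, a ≠ b →
      Env F n Z B a → Env F n Z B b → Env F n Z (insert b B) a := fun hab h1 h2 =>
    env_u hab h1 h2
  have hD : ∀ {B : Finset (Fin n)} {a b : Fin n}, a ≠ b → a ∉ B → b ∉ B →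
      Env F n Z (insert b B) a → Env F n Z (insert a B) b → Env F n Z B a :=
    fun hab ha hb h1 h2 => env_d hab ha hb h1 h2
  have hbase : ∀ k, Env F n Z (A k) (i k) := fun k => ⟨h k, DuEnv.base (hZ k)⟩
  have hinv := inv_univ hV hU hD hbase hinj hconn hn
  obtain ⟨C, H⟩ := hinv
  obtain ⟨l₁, l₂, hch, hto, -⟩ :=
    H (A ⟨0, hn⟩) ⟨⟨0, hn⟩, Finset.mem_univ _, Or.inl rfl⟩
  have himg : Finset.image i Finset.univ = Finset.univ :=
    Finset.eq_univ_of_card _ (by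
      rw [Finset.card_image_of_injective _ hinj, Finset.card_univ])
  rw [himg] at hto
  have hnd : (l₁ ++ l₂).Nodup := echain_nodup hV hch
  have hC : C = ∅ := by
    apply Finset.eq_empty_of_forall_notMem
    intro x hx
    exact echain_notmem hV hch x
      (by rw [← List.mem_toFinset, hto]; exact Finset.mem_univ x) hx
  rw [hC] at hch
  exact ⟨l₁ ++ l₂, hch, hnd, hto⟩

end Final

/-- If `Z = {x_{A₁,i₁},…,x_{Aₙ,iₙ}}` with `i₁,…,iₙ` pairwise distinct and the set of
edges `{(A_k,i_k)}` connected in `Γₙ`, then `Z` is sufficient. -/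
theorem stmt9 (F : Type*) [Field F] (n : ℕ)
    (A : Fin n → Finset (Fin n)) (i : Fin n → Fin n) (h : ∀ k, i k ∉ A k)
    (hinj : Function.Injective i) (hconn : GammaConnected A i) :
    Sufficient F n {q | ∃ k : Fin n, q = xgen F n (A k) (i k) (h k)} := by
  classical
  set Z : Set (Q F n) := {q | ∃ k : Fin n, q = xgen F n (A k) (i k) (h k)} with hZdef
  rcases Nat.eq_zero_or_pos n with rfl | hn
  · refine ⟨∅, by simp, Fin.elim0, fun k => k.elim0, ?_⟩
    simp [calPoly, calPolyOrd, List.finRange_zero]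
  · obtain ⟨l, hch, hnd, hto⟩ := stmt9_aux A i h hinj hconn hn Z (fun k => ⟨k, rfl⟩)
    have hlen : l.length = n := by
      rw [← List.toFinset_card_of_nodup hnd, hto, Finset.card_univ, Fintype.card_fin]
    have hfinj : Function.Injective (fun k : Fin n => l.get (Fin.cast hlen.symm k)) :=
      (List.nodup_iff_injective_get.mp hnd).comp (Fin.cast_injective _)
    set σ : Equiv.Perm (Fin n) :=
      Equiv.ofBijective _ (Finite.injective_iff_bijective.mp hfinj) with hσ
    have hσk : ∀ k : Fin n, σ k = l.get (Fin.cast hlen.symm k) := fun k => rfl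
    refine ⟨{q | DuEnv F n Z q}, fun q hq => hq, fun k =>
      xgen F n ((Finset.Iio k).image σ) (σ k) (sigma_notmem σ k), ?_, ?_⟩
    · -- each y k is in the envelope
      intro k
      have hkl : (k : ℕ) < l.length := by omega
      have hEdge := echain_getElem hch k.val hkl
      rw [Finset.empty_union] at hEdge
      have hset : (Finset.Iio k).image σ = (l.take k.val).toFinset := by
        ext x
        simp only [Finset.mem_image, Finset.mem_Iio, List.mem_toFinset,
          List.mem_take_iff_getElem]
        constructor
        · rintro ⟨b, hb, rfl⟩
          refine ⟨b.val, ?_, ?_⟩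
          · simp only [lt_min_iff]
            exact ⟨hb, by omega⟩
          · rw [hσk]
            simp [List.get_eq_getElem, Fin.cast]
        · rintro ⟨j, hj, rfl⟩
          simp only [lt_min_iff] at hj
          refine ⟨⟨j, by omega⟩, ?_, ?_⟩
          · exact hj.1
          · rw [hσk]
            simp [List.get_eq_getElem, Fin.cast]
        
      obtain ⟨hmem, hdu⟩ := hEdge
      show DuEnv F n Z (xgen F n ((Finset.Iio k).image σ) (σ k) (sigma_notmem σ k))
      have hval : σ k = l[(k : ℕ)] := by rw [hσk]; simp [List.get_eq_getElem, Fin.cast]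
      have hxeq : xgen F n ((Finset.Iio k).image σ) (σ k) (sigma_notmem σ k) =
          xgen F n ((l.take (k : ℕ)).toFinset) l[(k : ℕ)] hmem :=
        xgen_congr hset hval _ _
      rw [hxeq]
      exact hdu
    · -- the defining factorization
      rw [show calPoly F n = calPolyOrd F n σ from (calPolyOrd_eq σ).symm]
      rfl
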